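/- For d ≥ 1 and x ∈ H_d, the distance D_d(x) from x to the nearest point of A*_d equals sqrt(d(d+2)/(12(d+1))) if and only if the coordinates of x are uniformly distributed modulo 1, i.e., there exist a real number c and a permutation σ of {1, ..., d+1} such that x_(σ(k)) ≡ c + (k-1)/(d+1) (mod 1) for all k ∈ {1, ..., d+1}. -/

import Mathlib

/-- The hyperplane `H_d = {x ∈ ℝ^(d+1) : ∑ x_i = 0}`. -/
def hyperplaneH (d : ℕ) : Set (EuclideanSpace ℝ (Fin (d + 1))) :=
  {x | ∑ i, x i = 0}

/-- The permutohedral lattice `A*_d`: all points of `H_d` whose coordinate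
differences are integers. -/
def Astar (d : ℕ) : Set (EuclideanSpace ℝ (Fin (d + 1))) :=
  {x | x ∈ hyperplaneH d ∧ ∀ i j, ∃ k : ℤ, x i - x j = (k : ℝ)}

/-- The coordinates of `x` are uniformly distributed modulo 1: there are a real
number `c` and a permutation `σ` of the indices such that
`x (σ k) ≡ c + k/(d+1) (mod 1)` for all `k`. -/
def UnifDistMod1 {d : ℕ} (x : EuclideanSpace ℝ (Fin (d + 1))) : Prop :=
  ∃ c : ℝ, ∃ σ : Equiv.Perm (Fin (d + 1)), ∀ k : Fin (d + 1),
    ∃ m : ℤ, x (σ k) = c + ((k : ℕ) : ℝ) / ((d : ℝ) + 1) + (m : ℝ)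


/-!
Write `n = d + 1` and let `a₀ ≤ ⋯ ≤ a_{n-1}` be the sorted fractional parts of the coordinates of
`x`. Lifting the `j` smallest of them by one and recentring gives a point of `A*_d` at squared
distance `n` times the variance of the lifted values. Weight the lifts by the cyclic gaps
`a_{j+1} - a_j` (with `a_n = a₀ + 1`) plus `1/n`: summation by parts shows that the weighted mean
of their squared distances is `(n² - 1)/(12n) = d(d+2)/(12(d+1))` whatever `a` is. Hence some lift
is at least that close, and if none is closer then all lifts are equally far, which forces the
gaps to be `1/n`. Conversely, if the coordinates are equally spaced modulo 1, then `n(x - y)` is,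
up to a common shift, a vector of `n` distinct integers, and `n` distinct integers are at least as
spread out as `0, …, n - 1`.
-/

open Finset

lemma sum_range_cast_id (n : ℕ) : ∑ i ∈ range n, (i : ℝ) = n * (n - 1) / 2 := by
  induction n with
  | zero => simp
  | succ n ih => rw [sum_range_succ, ih]; push_cast; ring

lemma sum_range_cast_sq (n : ℕ) :
    ∑ i ∈ range n, (i : ℝ) ^ 2 = n * (n - 1) * (2 * n - 1) / 6 := by
  induction n with
  | zero => simp
  | succ n ih => rw [sum_range_succ, ih]; push_cast; ring

lemma sum_range_sub_mul_succ (b Q : ℕ → ℝ) (n : ℕ) :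
    ∑ j ∈ range n, (b (j + 1) - b j) * Q (j + 1)
      = b n * Q n - b 0 * Q 0 - ∑ j ∈ range n, b j * (Q (j + 1) - Q j) := by
  rw [eq_sub_iff_add_eq, ← sum_add_distrib, ← sum_range_sub (fun j => b j * Q j)]
  exact sum_congr rfl fun j _ => by ring

section SqDev

variable {ι : Type*}

noncomputable def sqDev (s : Finset ι) (u : ι → ℝ) : ℝ :=
  ∑ i ∈ s, u i ^ 2 - (∑ i ∈ s, u i) ^ 2 / #s

lemma sum_sub_mean_sq (s : Finset ι) (u : ι → ℝ) :
    ∑ i ∈ s, (u i - (∑ j ∈ s, u j) / #s) ^ 2 = sqDev s u := by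
  rcases s.eq_empty_or_nonempty with rfl | hs
  · simp [sqDev]
  have hcard : (#s : ℝ) ≠ 0 := by simpa using hs.ne_empty
  simp only [sqDev, sub_sq, sum_add_distrib, sum_sub_distrib, sum_const, nsmul_eq_mul,
    ← sum_mul, ← mul_sum]
  field_simp
  ring

lemma sum_sum_sub_sq (s : Finset ι) (u : ι → ℝ) :
    ∑ i ∈ s, ∑ j ∈ s, (u i - u j) ^ 2 = 2 * (#s * ∑ i ∈ s, u i ^ 2 - (∑ i ∈ s, u i) ^ 2) := by
  simp only [sub_sq, sum_add_distrib, sum_sub_distrib, sum_const, nsmul_eq_mul, ← sum_mul,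
    ← mul_sum]
  ring

lemma sqDev_congr {s : Finset ι} {u v : ι → ℝ} (h : ∀ i ∈ s, u i = v i) :
    sqDev s u = sqDev s v := by
  simp only [sqDev, sum_congr rfl h, sum_congr rfl fun i hi => congrArg (· ^ 2) (h i hi)]

lemma sqDev_add_const (s : Finset ι) (u : ι → ℝ) (c : ℝ) :
    sqDev s (fun i => u i + c) = sqDev s u := by
  rcases s.eq_empty_or_nonempty with rfl | hs
  · simp [sqDev]
  have hcard : (#s : ℝ) ≠ 0 := by simpa using hs.ne_empty
  simp only [sqDev, add_sq, sum_add_distrib, sum_const, nsmul_eq_mul, ← sum_mul, ← mul_sum]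
  field_simp
  ring

end SqDev

section Lifts

variable (n : ℕ) (a : ℕ → ℝ)

def lift (j k : ℕ) : ℝ := a k + if k < j then 1 else 0

@[simp] lemma lift_zero : lift a 0 = a := by ext k; simp [lift]

lemma sum_lift {j : ℕ} (hj : j ≤ n) :
    ∑ k ∈ range n, lift a j k = ∑ k ∈ range n, a k + j := by
  have hfilter : {k ∈ range n | k < j} = range j := by ext; simp; omega
  simp only [lift, sum_add_distrib, sum_ite, hfilter, sum_const_zero, add_zero, sum_const,
    card_range, nsmul_one]

lemma sum_lift_sq_succ_sub {j : ℕ} (hj : j < n) :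
    ∑ k ∈ range n, lift a (j + 1) k ^ 2 - ∑ k ∈ range n, lift a j k ^ 2 = 2 * a j + 1 := by
  rw [← sum_sub_distrib, sum_eq_single_of_mem j (mem_range.2 hj)]
  · simp only [lift, lt_add_one, if_true, lt_irrefl, if_false]
    ring
  · intro k _ hk
    simp only [lift]
    rcases Nat.lt_or_gt_of_ne hk with h | h
    · rw [if_pos (by omega), if_pos h]; ring
    · rw [if_neg (by omega), if_neg (by omega)]; ring

lemma sqDev_lift_succ_sub {j : ℕ} (hj : j < n) :
    sqDev (range n) (lift a (j + 1)) - sqDev (range n) (lift a j)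
      = 2 * a j + 1 - (2 * (∑ k ∈ range n, a k + j) + 1) / n := by
  have hn : (n : ℝ) ≠ 0 := Nat.cast_ne_zero.2 (by omega)
  have hsq := sum_lift_sq_succ_sub n a hj
  rw [sqDev, sqDev, card_range, sum_lift n a hj.le, sum_lift n a hj]
  field_simp
  push_cast
  linear_combination (n : ℝ) * hsq

lemma sqDev_lift_self : sqDev (range n) (lift a n) = sqDev (range n) (lift a 0) := by
  have hn : ∀ k ∈ range n, lift a n k = a k + 1 := fun k hk => by simp [lift, mem_range.1 hk]
  rw [sqDev_congr hn, sqDev_add_const, lift_zero]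

/-- The increments `tilt (j + 1) - tilt j = a (j + 1) - a j + 1 / n`, reading `a n` as `a 0 + 1`,
are the weights of the lifts. -/
noncomputable def tilt (j : ℕ) : ℝ := (if j < n then a j else a 0 + 1) + j / n

lemma sum_range_tilt_sub (hn : 0 < n) : ∑ j ∈ range n, (tilt n a (j + 1) - tilt n a j) = 2 := by
  have hn' : (n : ℝ) ≠ 0 := by positivity
  rw [sum_range_sub, tilt, tilt, if_neg (lt_irrefl n), if_pos hn]
  field_simp
  ring

lemma sum_tilt_sub_mul_sqDev_lift (hn : 0 < n) :
    ∑ j ∈ range n, (tilt n a (j + 1) - tilt n a j) * sqDev (range n) (lift a (j + 1))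
      = ((n : ℝ) ^ 2 - 1) / (6 * n) := by
  have hn' : (n : ℝ) ≠ 0 := by positivity
  set S := ∑ k ∈ range n, a k
  have hterm : ∀ j ∈ range n, tilt n a j * (sqDev (range n) (lift a (j + 1))
      - sqDev (range n) (lift a j)) = 2 * a j ^ 2 + (1 - (2 * S + 1) / n) * a j
        + (1 - (2 * S + 1) / n) / n * j - 2 / n ^ 2 * (j : ℝ) ^ 2 := by
    intro j hj
    rw [sqDev_lift_succ_sub n a (mem_range.1 hj), tilt, if_pos (mem_range.1 hj)]
    field_simp
    ring
  rw [sum_range_sub_mul_succ (tilt n a) (fun j => sqDev (range n) (lift a j)), sqDev_lift_self,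
    sum_congr rfl hterm, lift_zero, tilt, tilt, if_neg (lt_irrefl n), if_pos hn]
  simp only [sqDev, sum_add_distrib, sum_sub_distrib, ← mul_sum, card_range,
    sum_range_cast_id, sum_range_cast_sq]
  field_simp
  ring

lemma sum_tilt_sub_mul_sqDev_lift_eq_sum_mul (hn : 0 < n) :
    ∑ j ∈ range n, (tilt n a (j + 1) - tilt n a j) * sqDev (range n) (lift a (j + 1))
      = ∑ j ∈ range n, (tilt n a (j + 1) - tilt n a j) * (((n : ℝ) ^ 2 - 1) / (12 * n)) := by
  rw [sum_tilt_sub_mul_sqDev_lift n a hn, ← sum_mul, sum_range_tilt_sub n a hn]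
  ring

variable {n a}

lemma tilt_succ_sub_pos (hmono : MonotoneOn a (Set.Iio n)) (hspread : ∀ k < n, a k < a 0 + 1)
    {j : ℕ} (hj : j < n) : 0 < tilt n a (j + 1) - tilt n a j := by
  have hn : (0 : ℝ) < 1 / n := one_div_pos.2 (Nat.cast_pos.2 (by omega))
  have hstep : (if j + 1 < n then a (j + 1) else a 0 + 1) ≥ a j := by
    split_ifs with h
    · exact hmono (Set.mem_Iio.2 hj) (Set.mem_Iio.2 h) j.le_succ
    · exact (hspread j hj).le
  simp only [tilt, if_pos hj]
  push_cast
  linarith [show ((j : ℝ) + 1) / n = j / n + 1 / n by ring]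

lemma exists_sqDev_lift_le (hn : 0 < n) (hmono : MonotoneOn a (Set.Iio n))
    (hspread : ∀ k < n, a k < a 0 + 1) :
    ∃ j ≤ n, sqDev (range n) (lift a j) ≤ ((n : ℝ) ^ 2 - 1) / (12 * n) := by
  obtain ⟨j, hj, hle⟩ := exists_le_of_sum_le (nonempty_range_iff.2 hn.ne')
    (sum_tilt_sub_mul_sqDev_lift_eq_sum_mul n a hn).le
  exact ⟨j + 1, mem_range.1 hj,
    le_of_mul_le_mul_left hle (tilt_succ_sub_pos hmono hspread (mem_range.1 hj))⟩

lemma sqDev_lift_eq_of_le (hn : 0 < n) (hmono : MonotoneOn a (Set.Iio n))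
    (hspread : ∀ k < n, a k < a 0 + 1)
    (hle : ∀ j ≤ n, ((n : ℝ) ^ 2 - 1) / (12 * n) ≤ sqDev (range n) (lift a j)) :
    ∀ j ≤ n, sqDev (range n) (lift a j) = ((n : ℝ) ^ 2 - 1) / (12 * n) := by
  have hsucc := (sum_eq_sum_iff_of_le fun j hj => mul_le_mul_of_nonneg_left
    (hle (j + 1) (mem_range.1 hj)) (tilt_succ_sub_pos hmono hspread (mem_range.1 hj)).le).1
    (sum_tilt_sub_mul_sqDev_lift_eq_sum_mul n a hn).symm
  have hsucc' : ∀ j < n, sqDev (range n) (lift a (j + 1)) = ((n : ℝ) ^ 2 - 1) / (12 * n) :=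
    fun j hj => (mul_left_cancel₀ (tilt_succ_sub_pos hmono hspread hj).ne'
      (hsucc j (mem_range.2 hj))).symm
  rintro (_ | j) hj
  · have hlast := hsucc' (n - 1) (by omega)
    rwa [Nat.sub_add_cancel hn, sqDev_lift_self] at hlast
  · exact hsucc' j hj

lemma eq_add_div_of_le_sqDev_lift (hn : 0 < n) (hmono : MonotoneOn a (Set.Iio n))
    (hspread : ∀ k < n, a k < a 0 + 1)
    (hle : ∀ j ≤ n, ((n : ℝ) ^ 2 - 1) / (12 * n) ≤ sqDev (range n) (lift a j)) :
    ∀ k < n, a k = a 0 + k / n := by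
  have heq := sqDev_lift_eq_of_le hn hmono hspread hle
  have hstep : ∀ k < n, 2 * a k + 1 - (2 * (∑ i ∈ range n, a i + k) + 1) / n = 0 := by
    intro k hk
    rw [← sqDev_lift_succ_sub n a hk, heq _ hk, heq _ hk.le, sub_self]
  intro k hk
  have h0 := hstep 0 hn
  have hk := hstep k hk
  have hn' : (n : ℝ) ≠ 0 := by positivity
  field_simp at h0 hk ⊢
  push_cast at h0
  linarith

section DistinctIntegers

variable {n : ℕ}

lemma sub_sq_le_of_strictMono {p : Fin n → ℤ} (hp : StrictMono p) (k l : Fin n) :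
    (((k : ℕ) : ℝ) - (l : ℕ)) ^ 2 ≤ ((p k : ℝ) - p l) ^ 2 := by
  cases n with
  | zero => exact k.elim0
  | succ n => ?_
  have hgap : Monotone fun k : Fin (n + 1) => p k - (k : ℕ) := by
    refine Fin.monotone_iff_le_succ.2 fun i => ?_
    have := hp (Fin.castSucc_lt_succ (i := i))
    simp only [Fin.val_castSucc, Fin.val_succ]
    omega
  wlog hkl : l ≤ k generalizing k l
  · rw [sub_sq_comm, sub_sq_comm (p k : ℝ)]
    exact this l k (le_of_not_ge hkl)
  have h : ((k : ℕ) : ℤ) - (l : ℕ) ≤ p k - p l := by have := hgap hkl; simp only at this; omega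
  have hnonneg : (0 : ℤ) ≤ ((k : ℕ) : ℤ) - (l : ℕ) := by have : (l : ℕ) ≤ k := hkl; omega
  exact_mod_cast pow_le_pow_left₀ hnonneg h 2

lemma sum_sum_fin_sub_sq (n : ℕ) :
    ∑ k : Fin n, ∑ l : Fin n, (((k : ℕ) : ℝ) - (l : ℕ)) ^ 2
      = (n : ℝ) ^ 2 * ((n : ℝ) ^ 2 - 1) / 6 := by
  rw [sum_sum_sub_sq, card_univ, Fintype.card_fin,
    Fin.sum_univ_eq_sum_range (fun k => (k : ℝ) ^ 2),
    Fin.sum_univ_eq_sum_range (fun k => (k : ℝ)), sum_range_cast_sq, sum_range_cast_id]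
  ring

lemma le_card_mul_sum_sq_sub_sq_of_injective {q : Fin n → ℤ} (hq : Function.Injective q)
    (γ : ℝ) : (n : ℝ) ^ 2 * ((n : ℝ) ^ 2 - 1) / 12
      ≤ n * ∑ k, (γ + q k) ^ 2 - (∑ k, (γ + q k)) ^ 2 := by
  set τ := Tuple.sort q
  have hp : StrictMono (q ∘ τ) := (Tuple.monotone_sort q).strictMono_of_injective
    (hq.comp τ.injective)
  have hsorted : ∑ k, ∑ l, ((q k : ℝ) - q l) ^ 2 = ∑ k, ∑ l, ((q (τ k) : ℝ) - q (τ l)) ^ 2 := by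
    rw [← Equiv.sum_comp τ]
    exact sum_congr rfl fun k _ => (Equiv.sum_comp τ (fun l => ((q (τ k) : ℝ) - q l) ^ 2)).symm
  have hpairs : (n : ℝ) ^ 2 * ((n : ℝ) ^ 2 - 1) / 6 ≤ ∑ k, ∑ l, ((q k : ℝ) - q l) ^ 2 := by
    rw [← sum_sum_fin_sub_sq, hsorted]
    exact sum_le_sum fun k _ => sum_le_sum fun l _ => sub_sq_le_of_strictMono hp k l
  have hlagrange := sum_sum_sub_sq univ fun k => γ + q k
  simp only [add_sub_add_left_eq_sub, card_univ, Fintype.card_fin] at hlagrange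
  linarith

end DistinctIntegers

section SortedFract

variable {n : ℕ} (x : Fin n → ℝ)

noncomputable def fractSort : Equiv.Perm (Fin n) := Tuple.sort fun i => Int.fract (x i)

noncomputable def sortedFract (k : ℕ) : ℝ :=
  if h : k < n then Int.fract (x (fractSort x ⟨k, h⟩)) else 0

lemma sortedFract_val (k : Fin n) : sortedFract x k = Int.fract (x (fractSort x k)) := by
  simp [sortedFract]

lemma monotoneOn_sortedFract : MonotoneOn (sortedFract x) (Set.Iio n) := by
  intro k hk l hl hkl
  have hk : k < n := hk
  have hl : l < n := hl
  simp only [sortedFract, dif_pos hk, dif_pos hl]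
  exact Tuple.monotone_sort (fun i => Int.fract (x i))
    (show (⟨k, hk⟩ : Fin n) ≤ ⟨l, hl⟩ from hkl)

lemma sortedFract_lt_sortedFract_zero_add_one {k : ℕ} (hk : k < n) :
    sortedFract x k < sortedFract x 0 + 1 := by
  simp only [sortedFract, dif_pos hk, dif_pos (show 0 < n by omega)]
  linarith [Int.fract_lt_one (x (fractSort x ⟨k, hk⟩)),
    Int.fract_nonneg (x (fractSort x ⟨0, by omega⟩))]

end SortedFract

section Permutohedral

variable {d : ℕ}

lemma zero_mem_Astar (d : ℕ) : (0 : EuclideanSpace ℝ (Fin (d + 1))) ∈ Astar d :=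
  ⟨by simp [hyperplaneH], fun _ _ => ⟨0, by simp⟩⟩

lemma exists_mem_Astar_dist_sq_eq_sqDev {x : EuclideanSpace ℝ (Fin (d + 1))}
    (hx : x ∈ hyperplaneH d) (u : ℕ → ℝ) (σ : Equiv.Perm (Fin (d + 1)))
    (hu : ∀ k : Fin (d + 1), ∃ m : ℤ, x (σ k) - u k = m) :
    ∃ y ∈ Astar d, dist x y ^ 2 = sqDev (range (d + 1)) u := by
  set w : Fin (d + 1) → ℝ := fun i => u (σ.symm i)
  have hsum : ∀ f : ℝ → ℝ, ∑ i, f (w i) = ∑ k ∈ range (d + 1), f (u k) := fun f => by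
    rw [Equiv.sum_comp σ.symm (fun k : Fin (d + 1) => f (u k)),
      Fin.sum_univ_eq_sum_range (fun k => f (u k))]
  have hw : ∑ i, w i = ∑ k ∈ range (d + 1), u k := hsum id
  set μ := (∑ k ∈ range (d + 1), u k) / (d + 1 : ℕ)
  refine ⟨WithLp.toLp 2 fun i => x i - w i + μ, ⟨?_, fun i j => ?_⟩, ?_⟩
  · have hx : ∑ i, x i = 0 := hx
    change ∑ i, (x i - w i + μ) = 0
    rw [sum_add_distrib, sum_sub_distrib, hx, hw, sum_const, card_univ, Fintype.card_fin,
      nsmul_eq_mul, mul_div_cancel₀ _ (by positivity : ((d + 1 : ℕ) : ℝ) ≠ 0)]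
    ring
  · obtain ⟨mi, hmi⟩ := hu (σ.symm i)
    obtain ⟨mj, hmj⟩ := hu (σ.symm j)
    simp only [Equiv.apply_symm_apply] at hmi hmj
    exact ⟨mi - mj, by push_cast; change x i - w i + μ - (x j - w j + μ) = _; linarith⟩
  · rw [EuclideanSpace.dist_sq_eq, ← sum_sub_mean_sq, card_range]
    simp only [Real.dist_eq, sq_abs]
    exact (hsum fun t => (t - μ) ^ 2) ▸ sum_congr rfl fun i _ => by ring_nf

lemma exists_mem_Astar_dist_sq_eq_sqDev_lift {x : EuclideanSpace ℝ (Fin (d + 1))}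
    (hx : x ∈ hyperplaneH d) (j : ℕ) :
    ∃ y ∈ Astar d, dist x y ^ 2 = sqDev (range (d + 1)) (lift (sortedFract x.ofLp) j) :=
  exists_mem_Astar_dist_sq_eq_sqDev hx _ (fractSort x.ofLp) fun k =>
    ⟨⌊x (fractSort x.ofLp k)⌋ - if (k : ℕ) < j then 1 else 0, by
      rw [lift, sortedFract_val, Int.fract]
      split_ifs <;> push_cast <;> ring⟩

lemma unifDistMod1_of_sortedFract {x : EuclideanSpace ℝ (Fin (d + 1))}
    (h : ∀ k < d + 1, sortedFract x.ofLp k = sortedFract x.ofLp 0 + k / (d + 1 : ℕ)) :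
    UnifDistMod1 x := by
  refine ⟨sortedFract x.ofLp 0, fractSort x.ofLp, fun k => ⟨⌊x (fractSort x.ofLp k)⌋, ?_⟩⟩
  have hk := h k k.isLt
  rw [sortedFract_val] at hk
  push_cast at hk
  linarith [Int.floor_add_fract (x (fractSort x.ofLp k))]

lemma le_dist_sq_of_unifDistMod1 {x y : EuclideanSpace ℝ (Fin (d + 1))} (hx : UnifDistMod1 x)
    (hy : y ∈ Astar d) : (((d + 1 : ℕ) : ℝ) ^ 2 - 1) / (12 * (d + 1 : ℕ)) ≤ dist x y ^ 2 := by
  obtain ⟨c, σ, hσ⟩ := hx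
  choose m hm using hσ
  choose z hz using fun k => hy.2 (σ k) (σ 0)
  set γ : ℝ := (d + 1 : ℕ) * (c - y (σ 0))
  set q : Fin (d + 1) → ℤ := fun k => (k : ℕ) + (d + 1 : ℕ) * (m k - z k)
  have hq : Function.Injective q := by
    have hmod : ∀ k, q k % (d + 1 : ℕ) = (k : ℕ) := fun k => by
      simp only [q, Int.add_mul_emod_self_left]
      exact Int.emod_eq_of_lt (by omega) (by omega)
    intro k l hkl
    exact Fin.ext (by exact_mod_cast (hmod k).symm.trans (hkl ▸ hmod l))
  have hdiff : ∀ k, x (σ k) - y (σ k) = (γ + q k) / (d + 1 : ℕ) := fun k => by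
    rw [hm k, ← sub_add_cancel (y (σ k)) (y (σ 0)), hz k]
    simp only [γ, q]
    push_cast
    field_simp
    ring
  have hbound := le_card_mul_sum_sq_sub_sq_of_injective hq γ
  rw [EuclideanSpace.dist_sq_eq, ← Equiv.sum_comp σ]
  simp only [Real.dist_eq, sq_abs, hdiff, div_pow, ← sum_div]
  rw [div_le_div_iff₀ (by positivity) (by positivity)]
  nlinarith [sq_nonneg (∑ k, (γ + q k))]

end Permutohedral

theorem infDist_eq_max_iff_unifDist (d : ℕ)
    (x : EuclideanSpace ℝ (Fin (d + 1))) (hx : x ∈ hyperplaneH d) :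
    Metric.infDist x (Astar d) =
        Real.sqrt ((d : ℝ) * ((d : ℝ) + 2) / (12 * ((d : ℝ) + 1))) ↔
      UnifDistMod1 x := by
  have hM : (d : ℝ) * (d + 2) / (12 * (d + 1))
      = (((d + 1 : ℕ) : ℝ) ^ 2 - 1) / (12 * (d + 1 : ℕ)) := by push_cast; ring
  rw [hM]
  have hmono := monotoneOn_sortedFract x.ofLp
  have hspread k (hk : k < d + 1) := sortedFract_lt_sortedFract_zero_add_one x.ofLp hk
  have hle : Metric.infDist x (Astar d) ≤ √((((d + 1 : ℕ) : ℝ) ^ 2 - 1) / (12 * (d + 1 : ℕ))) := by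
    obtain ⟨j, -, hj⟩ := exists_sqDev_lift_le d.succ_pos hmono hspread
    obtain ⟨y, hy, hdist⟩ := exists_mem_Astar_dist_sq_eq_sqDev_lift hx j
    calc Metric.infDist x (Astar d) ≤ dist x y := Metric.infDist_le_dist_of_mem hy
      _ ≤ _ := Real.le_sqrt_of_sq_le (hdist ▸ hj)
  constructor
  · intro h
    refine unifDistMod1_of_sortedFract
      (eq_add_div_of_le_sqDev_lift d.succ_pos hmono hspread fun j _ => ?_)
    obtain ⟨y, hy, hdist⟩ := exists_mem_Astar_dist_sq_eq_sqDev_lift hx j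
    rw [← hdist, ← Real.sqrt_le_left dist_nonneg, ← h]
    exact Metric.infDist_le_dist_of_mem hy
  · intro hu
    refine hle.antisymm ((Metric.le_infDist ⟨0, zero_mem_Astar d⟩).2 fun y hy => ?_)
    exact (Real.sqrt_le_left dist_nonneg).2 (le_dist_sq_of_unifDistMod1 hu hy)
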